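/- arXiv:math/0608716 — 2 statements merged into one kernel-verified Lean document; each statement's English description precedes it below -/
import Mathlib

section
/- Consider a star graph with k+1 edges with lengths ℓ_e > 0 and weights ρ_e > 0 (e ∈ {0,…,k}), let γ ∈ {0, 1}, and let f ∈ ℂ^{k+1}. Then there exists a unique family h = (h_e) of twice continuously differentiable functions h_e : [0, ℓ_e] → ℂ such that h_e'' = γ·h_e on [0, ℓ_e] for every e, h_0(0) = h_1(0) = ⋯ = h_k(0), h_e(ℓ_e) = f_e for every e, and the Kirchhoff condition ∑_{e=0}^k ρ_e·h_e'(0) = 0 holds. Moreover, for every C¹ star function g with g_e(ℓ_e) = f_e for all e, one has ∑_{e=0}^k ρ_e ∫_0^{ℓ_e} (|g_e'(t)|² + γ·|g_e(t)|²) dt ≥ ∑_{e=0}^k ρ_e ∫_0^{ℓ_e} (|h_e'(t)|² + γ·|h_e(t)|²) dt, with equality if and only if g = h. -/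
/-!
On each edge a solution of `h'' = γ h` is `C t • a + S t • b`, where `(C, S)` is the fundamental
pair `(1, t)` or `(cosh, sinh)`. The far-end value fixes the slope `b` in terms of the vertex
value `a`, and Kirchhoff's condition becomes the scalar equation `D • a = N` with
`D = ∑ ρ_e C(ℓ_e) / S(ℓ_e) > 0`; this gives existence and uniqueness.

For a competitor `g` with the same data, Green's identity on each edge splits its energy as
`E(h) + E(g - h)` minus the boundary term `2 ⟪h_e'(0), g_e(0) - h_e(0)⟫`. The difference at the
vertex is the same on every edge, so Kirchhoff's condition cancels these terms. Hence
`E(g) = E(h) + E(g - h) ≥ E(h)`, with equality iff `g - h`, which vanishes at the far ends,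
has zero derivative.
-/

open MeasureTheory Set

section ODE

variable {E : Type*} [NormedAddCommGroup E] [NormedSpace ℝ E]

lemma ContDiffOn.hasDerivAt_of_mem_Ioo {g : ℝ → E} {a b t : ℝ}
    (hg : ContDiffOn ℝ 1 g (Icc a b)) (ht : t ∈ Ioo a b) : HasDerivAt g (deriv g t) t :=
  ((hg.differentiableOn one_ne_zero t (Ioo_subset_Icc_self ht)).differentiableAt
    (Icc_mem_nhds ht.1 ht.2)).hasDerivAt

/-- The fundamental system of `u'' = γ u` normalised at `0`; positivity on `[0, ∞)` is what
makes the Kirchhoff equation for the vertex value solvable. -/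
structure IsFundamentalPair (γ : ℝ) (C S : ℝ → ℝ) : Prop where
  contDiff_C : ContDiff ℝ 2 C
  contDiff_S : ContDiff ℝ 2 S
  deriv_deriv_C : ∀ t, deriv (deriv C) t = γ * C t
  deriv_deriv_S : ∀ t, deriv (deriv S) t = γ * S t
  C_zero : C 0 = 1
  deriv_C_zero : deriv C 0 = 0
  S_zero : S 0 = 0
  deriv_S_zero : deriv S 0 = 1
  C_pos : ∀ t, 0 ≤ t → 0 < C t
  S_pos : ∀ t, 0 < t → 0 < S t

lemma isFundamentalPair_zero : IsFundamentalPair 0 (fun _ => 1) id where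
  contDiff_C := contDiff_const
  contDiff_S := contDiff_id
  deriv_deriv_C t := by simp
  deriv_deriv_S t := by simp
  C_zero := rfl
  deriv_C_zero := by simp
  S_zero := rfl
  deriv_S_zero := by simp
  C_pos _ _ := one_pos
  S_pos _ ht := ht

lemma isFundamentalPair_one : IsFundamentalPair 1 Real.cosh Real.sinh where
  contDiff_C := Real.contDiff_cosh
  contDiff_S := Real.contDiff_sinh
  deriv_deriv_C t := by simp [Real.deriv_cosh, Real.deriv_sinh]
  deriv_deriv_S t := by simp [Real.deriv_cosh, Real.deriv_sinh]
  C_zero := Real.cosh_zero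
  deriv_C_zero := by simp [Real.deriv_cosh]
  S_zero := Real.sinh_zero
  deriv_S_zero := by simp [Real.deriv_sinh]
  C_pos t _ := Real.cosh_pos t
  S_pos _ ht := Real.sinh_pos_iff.mpr ht

def ivpSolution (C S : ℝ → ℝ) (a b : E) (t : ℝ) : E := C t • a + S t • b

lemma hasDerivAt_ivpSolution {C S : ℝ → ℝ} {c s t : ℝ} (hC : HasDerivAt C c t)
    (hS : HasDerivAt S s t) (a b : E) : HasDerivAt (ivpSolution C S a b) (c • a + s • b) t :=
  (hC.smul_const a).add (hS.smul_const b)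

namespace IsFundamentalPair

variable {γ : ℝ} {C S : ℝ → ℝ}

lemma deriv_ivpSolution (P : IsFundamentalPair γ C S) (a b : E) :
    deriv (ivpSolution C S a b) = ivpSolution (deriv C) (deriv S) a b :=
  funext fun t => (hasDerivAt_ivpSolution (P.contDiff_C.differentiable (by norm_num) t).hasDerivAt
    (P.contDiff_S.differentiable (by norm_num) t).hasDerivAt a b).deriv

lemma contDiff_ivpSolution (P : IsFundamentalPair γ C S) (a b : E) :
    ContDiff ℝ 2 (ivpSolution C S a b) :=
  (P.contDiff_C.smul contDiff_const).add (P.contDiff_S.smul contDiff_const)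

lemma deriv_deriv_ivpSolution (P : IsFundamentalPair γ C S) (a b : E) (t : ℝ) :
    deriv (deriv (ivpSolution C S a b)) t = γ • ivpSolution C S a b t := by
  rw [P.deriv_ivpSolution, (hasDerivAt_ivpSolution
    (P.contDiff_C.differentiable_deriv_two t).hasDerivAt
    (P.contDiff_S.differentiable_deriv_two t).hasDerivAt a b).deriv,
    P.deriv_deriv_C, P.deriv_deriv_S, ivpSolution, smul_add, mul_smul, mul_smul]

lemma ivpSolution_zero (P : IsFundamentalPair γ C S) (a b : E) : ivpSolution C S a b 0 = a := by
  simp [ivpSolution, P.C_zero, P.S_zero]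

lemma deriv_ivpSolution_zero (P : IsFundamentalPair γ C S) (a b : E) :
    deriv (ivpSolution C S a b) 0 = b := by
  simp [P.deriv_ivpSolution, ivpSolution, P.deriv_C_zero, P.deriv_S_zero]

/-- Uniqueness for the first-order system satisfied by `(u, u')`. -/
lemma eqOn_ivpSolution (P : IsFundamentalPair γ C S) {u : ℝ → E} (hu : ContDiff ℝ 2 u) {L : ℝ}
    (hode : ∀ t ∈ Icc 0 L, deriv (deriv u) t = γ • u t) :
    EqOn u (ivpSolution C S (u 0) (deriv u 0)) (Icc 0 L) := by
  let A : E × E →L[ℝ] E × E :=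
    (ContinuousLinearMap.snd ℝ E E).prod (γ • ContinuousLinearMap.fst ℝ E E)
  have hsystem : ∀ w : ℝ → E, ContDiff ℝ 2 w → (∀ t ∈ Icc 0 L, deriv (deriv w) t = γ • w t) →
      ContinuousOn (fun t => (w t, deriv w t)) (Icc 0 L) ∧
      ∀ t ∈ Ico 0 L, HasDerivWithinAt (fun t => (w t, deriv w t))
        (A (w t, deriv w t)) (Ici t) t := by
    intro w hw hwode
    refine ⟨(hw.continuous.prodMk (hw.continuous_deriv one_le_two)).continuousOn,
      fun t ht => ?_⟩
    have hder := ((hw.differentiable two_ne_zero t).hasDerivAt.prodMk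
      (hw.differentiable_deriv_two t).hasDerivAt).hasDerivWithinAt (s := Ici t)
    rwa [hwode t (Ico_subset_Icc_self ht)] at hder
  have hv := P.contDiff_ivpSolution (u 0) (deriv u 0)
  obtain ⟨hu_cont, hu_der⟩ := hsystem u hu hode
  obtain ⟨hv_cont, hv_der⟩ := hsystem _ hv fun t _ => P.deriv_deriv_ivpSolution _ _ t
  intro t ht
  refine congrArg Prod.fst (ODE_solution_unique (fun _ => A.lipschitz) hu_cont hu_der
    hv_cont hv_der ?_ ht)
  rw [P.ivpSolution_zero, P.deriv_ivpSolution_zero]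

end IsFundamentalPair

end ODE

noncomputable section Star

variable {ι E : Type*} [NormedAddCommGroup E] [NormedSpace ℝ E] {γ : ℝ}
  {C S : ℝ → ℝ} {ℓ ρ : ι → ℝ} {f : ι → E}

/-- The initial slope `b` with `C (ℓ e) • a + S (ℓ e) • b = f e`. -/
def edgeSlope (C S : ℝ → ℝ) (ℓ : ι → ℝ) (f : ι → E) (a : E) (e : ι) : E :=
  (S (ℓ e))⁻¹ • (f e - C (ℓ e) • a)

lemma ivpSolution_edgeSlope {e : ι} (hS : S (ℓ e) ≠ 0) (a : E) :
    ivpSolution C S a (edgeSlope C S ℓ f a e) (ℓ e) = f e := by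
  rw [ivpSolution, edgeSlope, smul_inv_smul₀ hS, add_sub_cancel]

variable [Fintype ι]

def kirchhoffCoeff (C S : ℝ → ℝ) (ℓ ρ : ι → ℝ) : ℝ := ∑ e, ρ e * C (ℓ e) / S (ℓ e)

def vertexValue (C S : ℝ → ℝ) (ℓ ρ : ι → ℝ) (f : ι → E) : E :=
  (kirchhoffCoeff C S ℓ ρ)⁻¹ • ∑ e, (ρ e / S (ℓ e)) • f e

def dirichletSolution (C S : ℝ → ℝ) (ℓ ρ : ι → ℝ) (f : ι → E) (e : ι) : ℝ → E :=
  ivpSolution C S (vertexValue C S ℓ ρ f) (edgeSlope C S ℓ f (vertexValue C S ℓ ρ f) e)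

structure IsKirchhoffSolution (γ : ℝ) (ℓ ρ : ι → ℝ) (f : ι → E) (h : ι → ℝ → E) : Prop where
  contDiff : ∀ e, ContDiff ℝ 2 (h e)
  ode : ∀ e, ∀ t ∈ Icc 0 (ℓ e), deriv (deriv (h e)) t = γ • h e t
  vertex : ∀ e e', h e 0 = h e' 0
  boundary : ∀ e, h e (ℓ e) = f e
  kirchhoff : ∑ e, ρ e • deriv (h e) 0 = 0

lemma sum_smul_edgeSlope (a : E) :
    ∑ e, ρ e • edgeSlope C S ℓ f a e
      = ∑ e, (ρ e / S (ℓ e)) • f e - kirchhoffCoeff C S ℓ ρ • a := by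
  simp only [edgeSlope, kirchhoffCoeff, smul_sub, smul_smul, Finset.sum_sub_distrib,
    Finset.sum_smul, div_eq_mul_inv, mul_assoc, mul_comm (S _)⁻¹]

namespace IsFundamentalPair

lemma kirchhoffCoeff_pos [Nonempty ι] (P : IsFundamentalPair γ C S) (hℓ : ∀ e, 0 < ℓ e)
    (hρ : ∀ e, 0 < ρ e) : 0 < kirchhoffCoeff C S ℓ ρ :=
  Finset.sum_pos (fun e _ =>
    div_pos (mul_pos (hρ e) (P.C_pos _ (hℓ e).le)) (P.S_pos _ (hℓ e))) Finset.univ_nonempty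

lemma isKirchhoffSolution_dirichletSolution [Nonempty ι] (P : IsFundamentalPair γ C S)
    (hℓ : ∀ e, 0 < ℓ e) (hρ : ∀ e, 0 < ρ e) (f : ι → E) :
    IsKirchhoffSolution γ ℓ ρ f (dirichletSolution C S ℓ ρ f) where
  contDiff e := P.contDiff_ivpSolution _ _
  ode e t _ := P.deriv_deriv_ivpSolution _ _ t
  vertex e e' := by simp only [dirichletSolution, P.ivpSolution_zero]
  boundary e := ivpSolution_edgeSlope (P.S_pos _ (hℓ e)).ne' _
  kirchhoff := by
    simp only [dirichletSolution, P.deriv_ivpSolution_zero, sum_smul_edgeSlope, vertexValue,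
      smul_inv_smul₀ (P.kirchhoffCoeff_pos hℓ hρ).ne', sub_self]

lemma deriv_zero_eq_edgeSlope (P : IsFundamentalPair γ C S) (hℓ : ∀ e, 0 < ℓ e) {h : ι → ℝ → E}
    (hh : IsKirchhoffSolution γ ℓ ρ f h) (e e₀ : ι) :
    deriv (h e) 0 = edgeSlope C S ℓ f (h e₀ 0) e := by
  have hend := P.eqOn_ivpSolution (hh.contDiff e) (hh.ode e) ⟨(hℓ e).le, le_rfl⟩
  rw [hh.boundary, ivpSolution, hh.vertex e e₀] at hend
  rw [edgeSlope, hend, add_sub_cancel_left, inv_smul_smul₀ (P.S_pos _ (hℓ e)).ne']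

lemma eqOn_dirichletSolution (P : IsFundamentalPair γ C S) (hℓ : ∀ e, 0 < ℓ e)
    (hρ : ∀ e, 0 < ρ e) {h : ι → ℝ → E} (hh : IsKirchhoffSolution γ ℓ ρ f h) (e : ι) :
    EqOn (h e) (dirichletSolution C S ℓ ρ f e) (Icc 0 (ℓ e)) := by
  have : Nonempty ι := ⟨e⟩
  have hD := (P.kirchhoffCoeff_pos hℓ hρ).ne'
  have hvertex : h e 0 = vertexValue C S ℓ ρ f := by
    have hkir := hh.kirchhoff
    simp only [P.deriv_zero_eq_edgeSlope hℓ hh _ e, sum_smul_edgeSlope, sub_eq_zero] at hkir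
    rw [vertexValue, hkir, inv_smul_smul₀ hD]
  intro t ht
  rw [P.eqOn_ivpSolution (hh.contDiff e) (hh.ode e) ht, P.deriv_zero_eq_edgeSlope hℓ hh e e,
    hvertex, dirichletSolution]

end IsFundamentalPair

end Star

section Energy

variable {E : Type*} [NormedAddCommGroup E] [InnerProductSpace ℝ E] {γ L : ℝ}

noncomputable def energyDensity (γ : ℝ) (g : ℝ → E) (t : ℝ) : ℝ := ‖deriv g t‖ ^ 2 + γ * ‖g t‖ ^ 2

noncomputable def edgeEnergy (γ L : ℝ) (g : ℝ → E) : ℝ := ∫ t in (0 : ℝ)..L, energyDensity γ g t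

lemma edgeEnergy_nonneg (hγ : 0 ≤ γ) (hL : 0 ≤ L) (g : ℝ → E) : 0 ≤ edgeEnergy γ L g :=
  intervalIntegral.integral_nonneg hL fun _ _ => by unfold energyDensity; positivity

lemma intervalIntegrable_energyDensity (γ : ℝ) (hL : 0 < L) {g : ℝ → E}
    (hg : ContDiffOn ℝ 1 g (Icc 0 L)) :
    IntervalIntegrable (energyDensity γ g) volume 0 L := by
  -- `deriv g` is junk at the endpoints; `derivWithin` is its continuous representative on `Icc`.
  have hcont : ContinuousOn (fun t => ‖derivWithin g (Icc 0 L) t‖ ^ 2 + γ * ‖g t‖ ^ 2)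
      (Icc 0 L) :=
    ((hg.continuousOn_derivWithin (uniqueDiffOn_Icc hL) le_rfl).norm.pow 2).add
      (continuousOn_const.mul (hg.continuousOn.norm.pow 2))
  refine (hcont.intervalIntegrable_of_Icc hL.le).congr_uIoo fun t ht => ?_
  rw [uIoo_of_le hL.le] at ht
  simp only [energyDensity, derivWithin_of_mem_nhds (Icc_mem_nhds ht.1 ht.2)]

lemma edgeEnergy_eq_zero_of_eqOn (hL : 0 ≤ L) {u : ℝ → E} (hu : EqOn u 0 (Icc 0 L)) :
    edgeEnergy γ L u = 0 := by
  rw [edgeEnergy, intervalIntegral.integral_congr_uIoo (g := fun _ => 0),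
    intervalIntegral.integral_zero]
  intro t ht
  rw [uIoo_of_le hL] at ht
  have hnhds : u =ᶠ[nhds t] 0 :=
    Filter.eventuallyEq_of_mem (Icc_mem_nhds ht.1 ht.2) hu
  simp [energyDensity, hnhds.deriv_eq, hu (Ioo_subset_Icc_self ht)]

/-- Green's identity on an edge: the cross term `2 ∫ ⟪h', u'⟫ + γ ⟪h, u⟫` integrates, thanks to
`h'' = γ h`, to the boundary term `2 ⟪h', u⟫`, which vanishes at `L`. -/
lemma edgeEnergy_eq_add_sub (hL : 0 < L) {h g : ℝ → E} (hh : ContDiff ℝ 2 h)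
    (hode : ∀ t ∈ Icc 0 L, deriv (deriv h) t = γ • h t) (hg : ContDiffOn ℝ 1 g (Icc 0 L))
    (hgL : g L = h L) :
    edgeEnergy γ L g
      = edgeEnergy γ L h + edgeEnergy γ L (g - h) - 2 * inner ℝ (deriv h 0) (g 0 - h 0) := by
  set u := g - h
  have hh1 : ContDiffOn ℝ 1 h (Icc 0 L) := (hh.of_le one_le_two).contDiffOn
  have hu : ContDiffOn ℝ 1 u (Icc 0 L) := hg.sub hh1
  have hcross : ∀ t ∈ Ioo 0 L, HasDerivAt (fun t => 2 * inner ℝ (deriv h t) (u t))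
      (energyDensity γ g t - energyDensity γ h t - energyDensity γ u t) t := by
    intro t ht
    have hu' := hu.hasDerivAt_of_mem_Ioo ht
    refine (((hh.differentiable_deriv_two t).hasDerivAt.inner ℝ hu').const_mul 2).congr_deriv ?_
    have hgu : g = h + u := (add_sub_cancel h g).symm
    rw [hode t (Ioo_subset_Icc_self ht), real_inner_smul_left, energyDensity, energyDensity,
      energyDensity, hgu, deriv_add (hh.differentiable two_ne_zero t) hu'.differentiableAt]
    simp only [Pi.add_apply, norm_add_sq_real]
    ring
  have ig := intervalIntegrable_energyDensity γ hL hg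
  have ih := intervalIntegrable_energyDensity γ hL hh1
  have iu := intervalIntegrable_energyDensity γ hL hu
  have hftc := intervalIntegral.integral_eq_sub_of_hasDerivAt_of_le
    (f := fun t => 2 * inner ℝ (deriv h t) (u t)) hL.le (continuousOn_const.mul
      ((hh.continuous_deriv one_le_two).continuousOn.inner hu.continuousOn)) hcross
    ((ig.sub ih).sub iu)
  rw [intervalIntegral.integral_sub (ig.sub ih) iu, intervalIntegral.integral_sub ig ih] at hftc
  simp only [u, Pi.sub_apply, hgL, sub_self, inner_zero_right, mul_zero, zero_sub] at hftc
  rw [edgeEnergy, edgeEnergy, edgeEnergy]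
  linarith

variable [CompleteSpace E]

lemma eqOn_zero_of_edgeEnergy_eq_zero (hγ : 0 ≤ γ) (hL : 0 < L) {u : ℝ → E}
    (hu : ContDiffOn ℝ 1 u (Icc 0 L)) (huL : u L = 0) (hE : edgeEnergy γ L u = 0) :
    EqOn u 0 (Icc 0 L) := by
  have hdensity : energyDensity γ u =ᵐ[volume.restrict (Ioc 0 L)] 0 := by
    have := (intervalIntegral.integral_eq_zero_iff_of_nonneg_ae
      (Filter.Eventually.of_forall fun _ => by unfold energyDensity; positivity)
      (intervalIntegrable_energyDensity γ hL hu)).mp hE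
    rwa [Ioc_eq_empty_of_le hL.le, union_empty] at this
  have hderiv : ∀ᵐ s, s ∈ Ioc 0 L → deriv u s = 0 := by
    refine (ae_restrict_iff' measurableSet_Ioc).mp ?_
    filter_upwards [hdensity] with s hs
    unfold energyDensity at hs
    have : ‖deriv u s‖ ^ 2 = 0 :=
      le_antisymm (le_of_le_of_eq (le_add_of_nonneg_right (by positivity)) hs) (by positivity)
    simpa using this
  intro t ht
  have hderiv' : ∀ᵐ s, s ∈ Ioc t L → deriv u s = 0 := by
    filter_upwards [hderiv] with s hs hst using hs (Ioc_subset_Ioc_left ht.1 hst)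
  have hftc := intervalIntegral.integral_eq_sub_of_hasDerivAt_of_le ht.2
    (hu.continuousOn.mono (Icc_subset_Icc_left ht.1))
    (fun s hs => hu.hasDerivAt_of_mem_Ioo (Ioo_subset_Ioo_left ht.1 hs))
    (intervalIntegrable_const.congr_ae (by
      rw [uIoc_of_le ht.2]
      exact ((ae_restrict_iff' measurableSet_Ioc).mpr hderiv').mono fun s hs => hs.symm))
  rwa [intervalIntegral.integral_congr_ae' (g := fun _ => 0) hderiv'
    (.of_forall fun s hs => absurd (hs.1.trans_le hs.2) (not_lt.mpr ht.2)),
    intervalIntegral.integral_zero, huL, zero_sub, eq_comm, neg_eq_zero] at hftc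

lemma edgeEnergy_eq_zero_iff (hγ : 0 ≤ γ) (hL : 0 < L) {u : ℝ → E}
    (hu : ContDiffOn ℝ 1 u (Icc 0 L)) (huL : u L = 0) :
    edgeEnergy γ L u = 0 ↔ EqOn u 0 (Icc 0 L) :=
  ⟨eqOn_zero_of_edgeEnergy_eq_zero hγ hL hu huL, edgeEnergy_eq_zero_of_eqOn hL.le⟩

end Energy

namespace IsKirchhoffSolution

variable {ι E : Type*} [Fintype ι] [NormedAddCommGroup E] [InnerProductSpace ℝ E] {γ : ℝ}
  {ℓ ρ : ι → ℝ} {f : ι → E} {h g : ι → ℝ → E}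

/-- By Kirchhoff's condition the boundary terms of Green's identity cancel at the vertex. -/
lemma sum_edgeEnergy_eq_add (hh : IsKirchhoffSolution γ ℓ ρ f h) (hℓ : ∀ e, 0 < ℓ e)
    (hg : ∀ e, ContDiffOn ℝ 1 (g e) (Icc 0 (ℓ e))) (hgv : ∀ e e', g e 0 = g e' 0)
    (hgf : ∀ e, g e (ℓ e) = f e) :
    ∑ e, ρ e * edgeEnergy γ (ℓ e) (g e)
      = ∑ e, ρ e * edgeEnergy γ (ℓ e) (h e) + ∑ e, ρ e * edgeEnergy γ (ℓ e) (g e - h e) := by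
  have hboundary : ∑ e, ρ e * (2 * inner ℝ (deriv (h e) 0) (g e 0 - h e 0)) = 0 := by
    rcases isEmpty_or_nonempty ι with _ | ⟨⟨e₀⟩⟩
    · simp
    calc _ = 2 * inner ℝ (∑ e, ρ e • deriv (h e) 0) (g e₀ 0 - h e₀ 0) := by
          rw [sum_inner, Finset.mul_sum]
          refine Finset.sum_congr rfl fun e _ => ?_
          rw [hgv e e₀, hh.vertex e e₀, real_inner_smul_left]
          ring
      _ = 0 := by rw [hh.kirchhoff, inner_zero_left, mul_zero]
  rw [Finset.sum_congr rfl fun e _ => congrArg (ρ e * ·) (edgeEnergy_eq_add_sub (hℓ e)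
    (hh.contDiff e) (hh.ode e) (hg e) ((hgf e).trans (hh.boundary e).symm))]
  simp only [mul_sub, mul_add, Finset.sum_sub_distrib, Finset.sum_add_distrib, hboundary,
    sub_zero]

lemma sum_edgeEnergy_le (hh : IsKirchhoffSolution γ ℓ ρ f h) (hγ : 0 ≤ γ) (hℓ : ∀ e, 0 < ℓ e)
    (hρ : ∀ e, 0 ≤ ρ e) (hg : ∀ e, ContDiffOn ℝ 1 (g e) (Icc 0 (ℓ e)))
    (hgv : ∀ e e', g e 0 = g e' 0) (hgf : ∀ e, g e (ℓ e) = f e) :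
    ∑ e, ρ e * edgeEnergy γ (ℓ e) (h e) ≤ ∑ e, ρ e * edgeEnergy γ (ℓ e) (g e) := by
  rw [hh.sum_edgeEnergy_eq_add hℓ hg hgv hgf]
  exact le_add_of_nonneg_right
    (Finset.sum_nonneg fun e _ => mul_nonneg (hρ e) (edgeEnergy_nonneg hγ (hℓ e).le _))

lemma sum_edgeEnergy_eq_iff [CompleteSpace E] (hh : IsKirchhoffSolution γ ℓ ρ f h)
    (hγ : 0 ≤ γ) (hℓ : ∀ e, 0 < ℓ e) (hρ : ∀ e, 0 < ρ e)
    (hg : ∀ e, ContDiffOn ℝ 1 (g e) (Icc 0 (ℓ e))) (hgv : ∀ e e', g e 0 = g e' 0)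
    (hgf : ∀ e, g e (ℓ e) = f e) :
    ∑ e, ρ e * edgeEnergy γ (ℓ e) (g e) = ∑ e, ρ e * edgeEnergy γ (ℓ e) (h e)
      ↔ ∀ e, EqOn (g e) (h e) (Icc 0 (ℓ e)) := by
  rw [hh.sum_edgeEnergy_eq_add hℓ hg hgv hgf, add_eq_left, Finset.sum_eq_zero_iff_of_nonneg
    fun e _ => mul_nonneg (hρ e).le (edgeEnergy_nonneg hγ (hℓ e).le _)]
  simp only [Finset.mem_univ, true_imp_iff, mul_eq_zero, (hρ _).ne', false_or]
  refine forall_congr' fun e => ?_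
  rw [edgeEnergy_eq_zero_iff (u := g e - h e) hγ (hℓ e)
    ((hg e).sub ((hh.contDiff e).of_le one_le_two).contDiffOn)
    (by rw [Pi.sub_apply, hgf, hh.boundary, sub_self])]
  exact forall₂_congr fun t _ => sub_eq_zero

end IsKirchhoffSolution

theorem stmt8_general (k : ℕ)
    (ℓ ρ : Fin (k + 1) → ℝ) (hℓ : ∀ e, 0 < ℓ e) (hρ : ∀ e, 0 < ρ e)
    (γ : ℝ) (hγ : γ = 0 ∨ γ = 1) (f : Fin (k + 1) → ℂ) :
    ∃ h : Fin (k + 1) → ℝ → ℂ,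
      (∀ e, ContDiff ℝ 2 (h e)) ∧
      (∀ e, ∀ t ∈ Icc (0 : ℝ) (ℓ e), deriv (deriv (h e)) t = (γ : ℂ) * h e t) ∧
      (∀ e e', h e 0 = h e' 0) ∧
      (∀ e, h e (ℓ e) = f e) ∧
      (∑ e, (ρ e : ℂ) * deriv (h e) 0 = 0) ∧
      (∀ h' : Fin (k + 1) → ℝ → ℂ,
        (∀ e, ContDiff ℝ 2 (h' e)) →
        (∀ e, ∀ t ∈ Icc (0 : ℝ) (ℓ e), deriv (deriv (h' e)) t = (γ : ℂ) * h' e t) →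
        (∀ e e', h' e 0 = h' e' 0) →
        (∀ e, h' e (ℓ e) = f e) →
        (∑ e, (ρ e : ℂ) * deriv (h' e) 0 = 0) →
        ∀ e, ∀ t ∈ Icc (0 : ℝ) (ℓ e), h' e t = h e t) ∧
      (∀ g : Fin (k + 1) → ℝ → ℂ,
        (∀ e, ContDiffOn ℝ 1 (g e) (Icc 0 (ℓ e))) →
        (∀ e e', g e 0 = g e' 0) →
        (∀ e, g e (ℓ e) = f e) →
        (∑ e, ρ e * ∫ t in (0 : ℝ)..(ℓ e), (‖deriv (h e) t‖ ^ 2 + γ * ‖h e t‖ ^ 2))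
            ≤ ∑ e, ρ e * ∫ t in (0 : ℝ)..(ℓ e), (‖deriv (g e) t‖ ^ 2 + γ * ‖g e t‖ ^ 2) ∧
        ((∑ e, ρ e * ∫ t in (0 : ℝ)..(ℓ e), (‖deriv (g e) t‖ ^ 2 + γ * ‖g e t‖ ^ 2))
              = (∑ e, ρ e * ∫ t in (0 : ℝ)..(ℓ e), (‖deriv (h e) t‖ ^ 2 + γ * ‖h e t‖ ^ 2))
            ↔ ∀ e, ∀ t ∈ Icc (0 : ℝ) (ℓ e), g e t = h e t)) := by
  obtain ⟨C, S, P⟩ : ∃ C S, IsFundamentalPair γ C S := by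
    rcases hγ with rfl | rfl
    exacts [⟨_, _, isFundamentalPair_zero⟩, ⟨_, _, isFundamentalPair_one⟩]
  have hγ₀ : 0 ≤ γ := by rcases hγ with rfl | rfl <;> norm_num
  have hsol := P.isKirchhoffSolution_dirichletSolution hℓ hρ f
  refine ⟨dirichletSolution C S ℓ ρ f, hsol.contDiff, ?_, hsol.vertex, hsol.boundary, ?_,
    fun h' hsm hode hv hbd hkir => P.eqOn_dirichletSolution hℓ hρ
      ⟨hsm, by simpa only [Complex.real_smul] using hode, hv, hbd,
        by simpa only [Complex.real_smul] using hkir⟩,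
    fun g hg hgv hgf => ⟨hsol.sum_edgeEnergy_le hγ₀ hℓ (fun e => (hρ e).le) hg hgv hgf,
      hsol.sum_edgeEnergy_eq_iff hγ₀ hℓ hρ hg hgv hgf⟩⟩
  · simpa only [Complex.real_smul] using hsol.ode
  · simpa only [Complex.real_smul] using hsol.kirchhoff

/-- (Dirichlet problem on the skeleton of an inflated vertex.)
On a star graph with `k+1` edges of lengths `ℓ_e` and weights `ρ_e`, for `γ ∈ {0,1}` and
boundary data `f ∈ ℂ^{k+1}` there is a unique family `h` of `C²` functions with
`h_e'' = γ·h_e` on `[0,ℓ_e]`, common vertex value, `h_e(ℓ_e) = f_e`, and Kirchhoff condition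
`∑_e ρ_e·h_e'(0) = 0`; moreover `h` minimizes the energy
`∑_e ρ_e ∫_0^{ℓ_e} (|g_e'|² + γ|g_e|²)` among all `C¹` star functions `g` with
`g_e(ℓ_e) = f_e`, with equality iff `g = h`. -/
theorem stmt8 (k : ℕ) (hk : 1 ≤ k)
    (ℓ ρ : Fin (k + 1) → ℝ) (hℓ : ∀ e, 0 < ℓ e) (hρ : ∀ e, 0 < ρ e)
    (γ : ℝ) (hγ : γ = 0 ∨ γ = 1) (f : Fin (k + 1) → ℂ) :
    ∃ h : Fin (k + 1) → ℝ → ℂ,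
      (∀ e, ContDiff ℝ 2 (h e)) ∧
      (∀ e, ∀ t ∈ Icc (0 : ℝ) (ℓ e), deriv (deriv (h e)) t = (γ : ℂ) * h e t) ∧
      (∀ e e', h e 0 = h e' 0) ∧
      (∀ e, h e (ℓ e) = f e) ∧
      (∑ e, (ρ e : ℂ) * deriv (h e) 0 = 0) ∧
      (∀ h' : Fin (k + 1) → ℝ → ℂ,
        (∀ e, ContDiff ℝ 2 (h' e)) →
        (∀ e, ∀ t ∈ Icc (0 : ℝ) (ℓ e), deriv (deriv (h' e)) t = (γ : ℂ) * h' e t) →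
        (∀ e e', h' e 0 = h' e' 0) →
        (∀ e, h' e (ℓ e) = f e) →
        (∑ e, (ρ e : ℂ) * deriv (h' e) 0 = 0) →
        ∀ e, ∀ t ∈ Icc (0 : ℝ) (ℓ e), h' e t = h e t) ∧
      (∀ g : Fin (k + 1) → ℝ → ℂ,
        (∀ e, ContDiffOn ℝ 1 (g e) (Icc 0 (ℓ e))) →
        (∀ e e', g e 0 = g e' 0) →
        (∀ e, g e (ℓ e) = f e) →
        (∑ e, ρ e * ∫ t in (0 : ℝ)..(ℓ e), (‖deriv (h e) t‖ ^ 2 + γ * ‖h e t‖ ^ 2))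
            ≤ ∑ e, ρ e * ∫ t in (0 : ℝ)..(ℓ e), (‖deriv (g e) t‖ ^ 2 + γ * ‖g e t‖ ^ 2) ∧
        ((∑ e, ρ e * ∫ t in (0 : ℝ)..(ℓ e), (‖deriv (g e) t‖ ^ 2 + γ * ‖g e t‖ ^ 2))
              = (∑ e, ρ e * ∫ t in (0 : ℝ)..(ℓ e), (‖deriv (h e) t‖ ^ 2 + γ * ‖h e t‖ ^ 2))
            ↔ ∀ e, ∀ t ∈ Icc (0 : ℝ) (ℓ e), g e t = h e t)) :=
  stmt8_general k ℓ ρ hℓ hρ γ hγ f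
end

section
/- Consider a star graph with k+1 edges with lengths ℓ_e > 0 and weights ρ_e > 0 (e ∈ {0,…,k}). For each e ∈ {0,…,k} let ψ_e = (ψ_{e,e'})_{e'=0}^k be a C¹ star function with real nonnegative values such that ∑_{e=0}^k ψ_{e,e'}(t) = 1 for every e' ∈ {0,…,k} and every t ∈ [0, ℓ_{e'}], and such that ψ_{e,e'}(ℓ_{e'}) = 1 if e' = e and ψ_{e,e'}(ℓ_{e'}) = 0 if e' ≠ e. Define the real (k+1)×(k+1) matrices Ā_{l,m} := ∑_{e'=0}^k ρ_{e'} ∫_0^{ℓ_{e'}} ψ_{l,e'}'(t)·ψ_{m,e'}'(t) dt and B̄_{l,m} := ∑_{e'=0}^k ρ_{e'} ∫_0^{ℓ_{e'}} ψ_{l,e'}(t)·ψ_{m,e'}(t) dt. Then Ā is positive semidefinite, B̄ is positive definite, and there exist constants ᾱ_A > 0 and ᾱ_B > 0 such that for every f ∈ ℂ^{k+1}: (1/ᾱ_A)·|f⌞1⃗|² ≤ ∑_{l,m} Ā_{l,m}·f_l·conj(f_m) ≤ ᾱ_A·|f⌞1⃗|², and (1/ᾱ_B)·|f|² ≤ ∑_{l,m}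 B̄_{l,m}·f_l·conj(f_m) ≤ ᾱ_B·|f|². -/
/-!
Both matrices are weighted Gram matrices on the star: for real `x`,
`x ⬝ B̄ x = ∑ₑ ρₑ ∫ (∑ₗ xₗ ψₗₑ)²` and `x ⬝ Ā x = ∑ₑ ρₑ ∫ (∑ₗ xₗ ψₗₑ')²`, and the complex
quadratic form is the sum of the forms of the real and imaginary parts. If the mass energy
vanishes, `∑ₗ xₗ ψₗₑ ≡ 0`, and evaluating at the far end of edge `e` gives `xₑ = 0`. If the
stiffness energy vanishes, `∑ₗ xₗ ψₗₑ` is constant on each edge, so `xₑ`, its value at the far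
end, equals its value at the common vertex: the kernel of `Ā` is spanned by `1⃗`, and `Ā` is
invariant under adding multiples of `1⃗` because `∑ₗ ψₗₑ' = 0`. By compactness of the unit
sphere, a continuous 2-homogeneous form that is positive on a closed cone minus the origin is
comparable to `‖·‖²` there; this is applied on `ℂ^{k+1}` and on `1⃗^⊥`.
-/

open MeasureTheory Set

/-- The component of `f ∈ ℂ^{k+1}` orthogonal to `1⃗ = (k+1)^{-1/2}(1,…,1)`:
`f⌞1⃗ = f − ⟨f,1⃗⟩·1⃗`, i.e. `(f⌞1⃗)_i = f_i − (∑_j f_j)/(k+1)`. -/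
noncomputable def perpOne {m : ℕ} (f : Fin m → ℂ) : Fin m → ℂ :=
  fun i => f i - (∑ j, f j) / (m : ℂ)

/-- The (real) value of the Hermitian quadratic form `∑_{l,m} M_{l,m}·f_l·conj(f_m)`
associated with a real matrix `M`. -/
noncomputable def quadFormC {m : ℕ} (M : Fin m → Fin m → ℝ) (f : Fin m → ℂ) : ℝ :=
  (∑ l, ∑ j, (M l j : ℂ) * f l * (starRingEnd ℂ) (f j)).re

open Matrix

theorem exists_bounds_of_homogeneous_of_pos {E : Type*} [NormedAddCommGroup E]
    [NormedSpace ℝ E] [ProperSpace E] {S : Set E} (hS : IsClosed S)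
    (hS_smul : ∀ (r : ℝ), ∀ x ∈ S, r • x ∈ S) {Q : E → ℝ} (hQ : Continuous Q)
    (hQ_smul : ∀ (r : ℝ) (x : E), Q (r • x) = r ^ 2 * Q x) (hQ_pos : ∀ x ∈ S, x ≠ 0 → 0 < Q x) :
    ∃ α : ℝ, 0 < α ∧ ∀ x ∈ S, 1 / α * ‖x‖ ^ 2 ≤ Q x ∧ Q x ≤ α * ‖x‖ ^ 2 := by
  set K := Metric.sphere (0 : E) 1 ∩ S
  have hK : IsCompact K := (isCompact_sphere 0 1).inter_right hS
  have hK_pos : ∀ u ∈ K, 0 < Q u := fun u hu =>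
    hQ_pos u hu.2 (ne_zero_of_mem_unit_sphere ⟨u, hu.1⟩)
  obtain ⟨C, hC⟩ := hK.exists_bound_of_continuousOn hQ.continuousOn
  obtain ⟨C', hC'⟩ := hK.exists_bound_of_continuousOn
    (hQ.continuousOn.inv₀ fun u hu => (hK_pos u hu).ne')
  refine ⟨max 1 (max C C'), by positivity, fun x hx => ?_⟩
  rcases eq_or_ne x 0 with rfl | hx0
  · have hQ0 : Q 0 = 0 := by simpa using hQ_smul 0 0
    simp [hQ0]
  set u := ‖x‖⁻¹ • x
  have hu : u ∈ K := ⟨by simp [u, norm_smul, hx0], hS_smul _ x hx⟩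
  have hQx : Q x = ‖x‖ ^ 2 * Q u := by
    rw [← hQ_smul, smul_inv_smul₀ (norm_ne_zero_iff.2 hx0)]
  have hQu := hK_pos u hu
  have hup : Q u ≤ max 1 (max C C') :=
    (le_abs_self _).trans ((hC u hu).trans ((le_max_left _ _).trans (le_max_right _ _)))
  have hlow : (Q u)⁻¹ ≤ max 1 (max C C') := by
    have := hC' u hu
    rw [Pi.inv_apply, norm_inv, Real.norm_of_nonneg hQu.le] at this
    exact this.trans ((le_max_right _ _).trans (le_max_right _ _))
  rw [hQx]
  constructor
  · rw [mul_comm (‖x‖ ^ 2)]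
    gcongr
    rw [one_div]
    exact inv_le_of_inv_le₀ hQu hlow
  · rw [mul_comm (‖x‖ ^ 2)]
    gcongr

theorem quadFormC_eq_re_add_im {m : ℕ} (M : Fin m → Fin m → ℝ) (f : Fin m → ℂ) :
    quadFormC M f = (fun l => (f l).re) ⬝ᵥ (Matrix.of M *ᵥ fun l => (f l).re)
      + (fun l => (f l).im) ⬝ᵥ (Matrix.of M *ᵥ fun l => (f l).im) := by
  simp only [quadFormC, dotProduct, Matrix.mulVec, Matrix.of_apply, Finset.mul_sum,
    Complex.re_sum, ← Finset.sum_add_distrib]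
  refine Finset.sum_congr rfl fun l _ => Finset.sum_congr rfl fun j _ => ?_
  simp only [Complex.mul_re, Complex.mul_im, Complex.conj_re, Complex.conj_im,
    Complex.ofReal_re, Complex.ofReal_im]
  ring

theorem quadFormC_smul {m : ℕ} (M : Fin m → Fin m → ℝ) (r : ℝ) (f : Fin m → ℂ) :
    quadFormC M (r • f) = r ^ 2 * quadFormC M f := by
  have h : ∀ l j, (M l j : ℂ) * (r • f) l * (starRingEnd ℂ) ((r • f) j)
      = ((r ^ 2 : ℝ) : ℂ) * ((M l j : ℂ) * f l * (starRingEnd ℂ) (f j)) := fun l j => by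
    simp only [Pi.smul_apply, Complex.real_smul, map_mul, Complex.conj_ofReal]
    push_cast
    ring
  simp only [quadFormC, h, ← Finset.mul_sum, Complex.re_ofReal_mul]

theorem continuous_quadFormC {m : ℕ} (M : Fin m → Fin m → ℝ) : Continuous (quadFormC M) := by
  unfold quadFormC
  fun_prop

theorem exists_quadFormC_bounds {m : ℕ} (M : Fin m → Fin m → ℝ) {S : Set (Fin m → ℂ)}
    (hS : IsClosed S) (hS_smul : ∀ (r : ℝ), ∀ f ∈ S, r • f ∈ S)
    (hpos : ∀ f ∈ S, f ≠ 0 → 0 < quadFormC M f) :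
    ∃ α : ℝ, 0 < α ∧ ∀ f ∈ S, 1 / α * ∑ i, ‖f i‖ ^ 2 ≤ quadFormC M f ∧
      quadFormC M f ≤ α * ∑ i, ‖f i‖ ^ 2 := by
  obtain ⟨α, hα, h⟩ := exists_bounds_of_homogeneous_of_pos (E := EuclideanSpace ℂ (Fin m))
    (S := WithLp.ofLp ⁻¹' S) (hS.preimage (PiLp.continuous_ofLp 2 _))
    (fun r x hx => hS_smul r _ hx) ((continuous_quadFormC M).comp (PiLp.continuous_ofLp 2 _))
    (fun r x => quadFormC_smul M r x) (fun x hx hx0 => hpos _ hx (by simpa using hx0))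
  refine ⟨α, hα, fun f hf => ?_⟩
  simpa [EuclideanSpace.norm_sq_eq] using h (WithLp.toLp 2 f) hf

theorem sum_perpOne {m : ℕ} (f : Fin m → ℂ) : ∑ i, perpOne f i = 0 := by
  rcases eq_or_ne m 0 with rfl | hm
  · simp
  simp only [perpOne, Finset.sum_sub_distrib, Finset.sum_const, Finset.card_univ,
    Fintype.card_fin, nsmul_eq_mul]
  rw [mul_div_cancel₀ _ (Nat.cast_ne_zero.2 hm), sub_self]

theorem exists_quadFormC_bounds_of_pos {m : ℕ} (M : Fin m → Fin m → ℝ)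
    (hpos : ∀ f, f ≠ 0 → 0 < quadFormC M f) :
    ∃ α : ℝ, 0 < α ∧ ∀ f, 1 / α * ∑ i, ‖f i‖ ^ 2 ≤ quadFormC M f ∧
      quadFormC M f ≤ α * ∑ i, ‖f i‖ ^ 2 := by
  obtain ⟨α, hα, h⟩ := exists_quadFormC_bounds M isClosed_univ (fun _ _ _ => trivial)
    fun f _ => hpos f
  exact ⟨α, hα, fun f => h f trivial⟩

theorem exists_quadFormC_perpOne_bounds {m : ℕ} (M : Fin m → Fin m → ℝ)
    (hnonneg : ∀ f, 0 ≤ quadFormC M f)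
    (hconst : ∀ f c, quadFormC M (fun i => f i + c) = quadFormC M f)
    (hker : ∀ f, quadFormC M f = 0 → ∀ i j, f i = f j) :
    ∃ α : ℝ, 0 < α ∧ ∀ f, 1 / α * ∑ i, ‖perpOne f i‖ ^ 2 ≤ quadFormC M f ∧
      quadFormC M f ≤ α * ∑ i, ‖perpOne f i‖ ^ 2 := by
  have hpos : ∀ f ∈ {f : Fin m → ℂ | ∑ i, f i = 0}, f ≠ 0 → 0 < quadFormC M f := by
    refine fun f hf hf0 => (hnonneg f).lt_of_ne fun h => hf0 (funext fun i => ?_)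
    have hsum : (m : ℂ) * f i = 0 := by
      simpa [← hker f h.symm i] using hf
    exact (mul_eq_zero.1 hsum).resolve_left (Nat.cast_ne_zero.2 (Fin.pos i).ne')
  obtain ⟨α, hα, h⟩ := exists_quadFormC_bounds M
    (isClosed_eq (continuous_finsetSum _ fun i _ => continuous_apply i) continuous_const)
    (fun r f (hf : ∑ i, f i = 0) => show ∑ i, (r • f) i = 0 by
      simp only [Pi.smul_apply, ← Finset.smul_sum, hf, smul_zero]) hpos
  refine ⟨α, hα, fun f => ?_⟩
  have hperp : quadFormC M (perpOne f) = quadFormC M f := by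
    rw [← hconst f (-((∑ j, f j) / m))]
    exact congrArg _ (funext fun i => sub_eq_add_neg _ _)
  simpa only [hperp] using h (perpOne f) (sum_perpOne f)

section StarGram

open intervalIntegral

variable {ι κ : Type*}

noncomputable def starGram [Fintype κ] (ℓ ρ : κ → ℝ) (u : ι → κ → ℝ → ℝ) : ι → ι → ℝ :=
  fun l j => ∑ e, ρ e * ∫ t in (0 : ℝ)..ℓ e, u l e t * u j e t

noncomputable def starEnergy [Fintype ι] [Fintype κ] (ℓ ρ : κ → ℝ) (u : ι → κ → ℝ → ℝ)
    (x : ι → ℝ) : ℝ :=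
  ∑ e, ρ e * ∫ t in (0 : ℝ)..ℓ e, (∑ l, x l * u l e t) ^ 2

variable {ℓ ρ : κ → ℝ} {u : ι → κ → ℝ → ℝ}

theorem starGram_isHermitian [Fintype κ] : (Matrix.of (starGram ℓ ρ u)).IsHermitian := by
  ext l j
  simp only [starGram, conjTranspose_apply, of_apply, star_trivial]
  exact Finset.sum_congr rfl fun e _ => by simp only [mul_comm (u j e _)]

theorem starGram_congr_Ioo [Fintype κ] (hℓ : ∀ e, 0 ≤ ℓ e) {v : ι → κ → ℝ → ℝ}
    (huv : ∀ l e, EqOn (u l e) (v l e) (Ioo 0 (ℓ e))) : starGram ℓ ρ u = starGram ℓ ρ v := by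
  funext l j
  refine Finset.sum_congr rfl fun e _ => ?_
  simp only [integral_of_le (hℓ e), integral_Ioc_eq_integral_Ioo]
  congr 1
  exact setIntegral_congr_fun measurableSet_Ioo fun t ht => by rw [huv l e ht, huv j e ht]

theorem sum_sum_mul_integral_mul_eq_integral_sq [Fintype ι] {L : ℝ} (hL : 0 ≤ L) (w : ι → ℝ → ℝ)
    (hw : ∀ l, ContinuousOn (w l) (Icc 0 L)) (x : ι → ℝ) :
    ∑ l, ∑ j, x l * x j * ∫ t in (0 : ℝ)..L, w l t * w j t
      = ∫ t in (0 : ℝ)..L, (∑ l, x l * w l t) ^ 2 := by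
  have hcont : ∀ l j, ContinuousOn (fun t => x l * x j * (w l t * w j t)) (Icc 0 L) :=
    fun l j => continuousOn_const.mul ((hw l).mul (hw j))
  have hint : ∀ l j, IntervalIntegrable (fun t => x l * x j * (w l t * w j t)) volume 0 L :=
    fun l j => (hcont l j).intervalIntegrable_of_Icc hL
  have hint' : ∀ l, IntervalIntegrable (fun t => ∑ j, x l * x j * (w l t * w j t)) volume 0 L :=
    fun l => (continuousOn_finsetSum _ fun j _ => hcont l j).intervalIntegrable_of_Icc hL
  calc ∑ l, ∑ j, x l * x j * ∫ t in (0 : ℝ)..L, w l t * w j t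
      = ∑ l, ∑ j, ∫ t in (0 : ℝ)..L, x l * x j * (w l t * w j t) := by
        simp only [intervalIntegral.integral_const_mul]
    _ = ∫ t in (0 : ℝ)..L, ∑ l, ∑ j, x l * x j * (w l t * w j t) := by
        rw [integral_finsetSum fun l _ => hint' l]
        exact Finset.sum_congr rfl fun l _ => (integral_finsetSum fun j _ => hint l j).symm
    _ = ∫ t in (0 : ℝ)..L, (∑ l, x l * w l t) ^ 2 := by
        simp only [sq, Finset.sum_mul_sum]
        exact integral_congr fun t _ => by simp only [mul_mul_mul_comm]

theorem dotProduct_starGram_mulVec [Fintype ι] [Fintype κ] (hℓ : ∀ e, 0 ≤ ℓ e)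
    (hu : ∀ l e, ContinuousOn (u l e) (Icc 0 (ℓ e))) (x : ι → ℝ) :
    x ⬝ᵥ Matrix.of (starGram ℓ ρ u) *ᵥ x = starEnergy ℓ ρ u x := by
  simp only [starEnergy, ← sum_sum_mul_integral_mul_eq_integral_sq (hℓ _) _ (fun l => hu l _),
    dotProduct, mulVec, starGram, of_apply, Finset.mul_sum, Finset.sum_mul]
  conv_rhs => rw [Finset.sum_comm]
  refine Finset.sum_congr rfl fun l _ => ?_
  rw [Finset.sum_comm]
  exact Finset.sum_congr rfl fun e _ => Finset.sum_congr rfl fun j _ => by ring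

theorem starEnergy_nonneg [Fintype ι] [Fintype κ] (hℓ : ∀ e, 0 ≤ ℓ e) (hρ : ∀ e, 0 ≤ ρ e)
    (x : ι → ℝ) : 0 ≤ starEnergy ℓ ρ u x :=
  Finset.sum_nonneg fun e _ => mul_nonneg (hρ e) (integral_nonneg (hℓ e) fun _ _ => sq_nonneg _)

theorem posSemidef_starGram [Fintype ι] [Fintype κ] (hℓ : ∀ e, 0 ≤ ℓ e) (hρ : ∀ e, 0 ≤ ρ e)
    (hu : ∀ l e, ContinuousOn (u l e) (Icc 0 (ℓ e))) : (Matrix.of (starGram ℓ ρ u)).PosSemidef :=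
  posSemidef_iff_dotProduct_mulVec.2 ⟨starGram_isHermitian, fun x => by
    simpa only [star_trivial, dotProduct_starGram_mulVec hℓ hu] using starEnergy_nonneg hℓ hρ x⟩

theorem posDef_starGram [Fintype ι] [Fintype κ] (hℓ : ∀ e, 0 ≤ ℓ e) (hρ : ∀ e, 0 ≤ ρ e)
    (hu : ∀ l e, ContinuousOn (u l e) (Icc 0 (ℓ e)))
    (hker : ∀ x, starEnergy ℓ ρ u x = 0 → x = 0) : (Matrix.of (starGram ℓ ρ u)).PosDef :=
  posDef_iff_dotProduct_mulVec.2 ⟨starGram_isHermitian, fun x hx => by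
    rw [star_trivial, dotProduct_starGram_mulVec hℓ hu]
    exact (starEnergy_nonneg hℓ hρ x).lt_of_ne fun h => hx (hker x h.symm)⟩

theorem starEnergy_add_const [Fintype ι] [Fintype κ] (hℓ : ∀ e, 0 ≤ ℓ e)
    (hsum : ∀ e, ∀ t ∈ Icc 0 (ℓ e), ∑ l, u l e t = 0) (x : ι → ℝ) (c : ℝ) :
    starEnergy ℓ ρ u (fun l => x l + c) = starEnergy ℓ ρ u x := by
  refine Finset.sum_congr rfl fun e _ => congrArg _ (integral_congr fun t ht => ?_)
  rw [uIcc_of_le (hℓ e)] at ht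
  simp only [add_mul, Finset.sum_add_distrib, ← Finset.mul_sum, hsum e t ht, mul_zero, add_zero]

theorem eqOn_zero_of_integral_eq_zero {g : ℝ → ℝ} {L : ℝ} (hL : 0 < L)
    (hg : ContinuousOn g (Icc 0 L)) (hg_nonneg : ∀ t ∈ Icc 0 L, 0 ≤ g t)
    (h : ∫ t in (0 : ℝ)..L, g t = 0) : EqOn g 0 (Icc 0 L) := by
  rw [integral_eq_zero_iff_of_le_of_nonneg_ae hL.le _ (hg.intervalIntegrable_of_Icc hL.le),
    Measure.restrict_congr_set Ioc_ae_eq_Icc] at h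
  · exact Measure.eqOn_Icc_of_ae_eq volume hL.ne h hg continuousOn_const
  · exact (ae_restrict_iff' measurableSet_Ioc).2
      (.of_forall fun t ht => hg_nonneg t (Ioc_subset_Icc_self ht))

theorem sum_mul_eq_zero_of_starEnergy_eq_zero [Fintype ι] [Fintype κ] (hℓ : ∀ e, 0 < ℓ e)
    (hρ : ∀ e, 0 < ρ e) (hu : ∀ l e, ContinuousOn (u l e) (Icc 0 (ℓ e))) {x : ι → ℝ}
    (h : starEnergy ℓ ρ u x = 0) (e : κ) : ∀ t ∈ Icc 0 (ℓ e), ∑ l, x l * u l e t = 0 := by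
  have he := (Finset.sum_eq_zero_iff_of_nonneg fun e _ => mul_nonneg (hρ e).le
    (integral_nonneg (hℓ e).le fun _ _ => sq_nonneg _)).1 h e (Finset.mem_univ e)
  have hcont : ContinuousOn (fun t => (∑ l, x l * u l e t) ^ 2) (Icc 0 (ℓ e)) :=
    (continuousOn_finsetSum _ fun l _ => continuousOn_const.mul (hu l e)).pow 2
  intro t ht
  exact pow_eq_zero_iff two_ne_zero |>.1 <| eqOn_zero_of_integral_eq_zero (hℓ e) hcont
    (fun _ _ => sq_nonneg _) ((mul_eq_zero.1 he).resolve_left (hρ e).ne') ht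

end StarGram

section QuadFormCStarGram

variable {n : ℕ} {κ : Type*} [Fintype κ] {ℓ ρ : κ → ℝ} {u : Fin n → κ → ℝ → ℝ}

theorem quadFormC_starGram (hℓ : ∀ e, 0 ≤ ℓ e) (hu : ∀ l e, ContinuousOn (u l e) (Icc 0 (ℓ e)))
    (f : Fin n → ℂ) :
    quadFormC (starGram ℓ ρ u) f
      = starEnergy ℓ ρ u (fun l => (f l).re) + starEnergy ℓ ρ u (fun l => (f l).im) := by
  rw [quadFormC_eq_re_add_im, dotProduct_starGram_mulVec hℓ hu, dotProduct_starGram_mulVec hℓ hu]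

theorem quadFormC_starGram_nonneg (hℓ : ∀ e, 0 ≤ ℓ e) (hρ : ∀ e, 0 ≤ ρ e)
    (hu : ∀ l e, ContinuousOn (u l e) (Icc 0 (ℓ e))) (f : Fin n → ℂ) :
    0 ≤ quadFormC (starGram ℓ ρ u) f := by
  rw [quadFormC_starGram hℓ hu]
  exact add_nonneg (starEnergy_nonneg hℓ hρ _) (starEnergy_nonneg hℓ hρ _)

theorem quadFormC_starGram_eq_zero_iff (hℓ : ∀ e, 0 ≤ ℓ e) (hρ : ∀ e, 0 ≤ ρ e)
    (hu : ∀ l e, ContinuousOn (u l e) (Icc 0 (ℓ e))) (f : Fin n → ℂ) :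
    quadFormC (starGram ℓ ρ u) f = 0 ↔
      starEnergy ℓ ρ u (fun l => (f l).re) = 0 ∧ starEnergy ℓ ρ u (fun l => (f l).im) = 0 := by
  rw [quadFormC_starGram hℓ hu]
  exact add_eq_zero_iff_of_nonneg (starEnergy_nonneg hℓ hρ _) (starEnergy_nonneg hℓ hρ _)

end QuadFormCStarGram

section PartitionOfUnity

variable {ι : Type*} [Fintype ι]

theorem derivWithin_sum_mul {v : ι → ℝ → ℝ} {s : Set ℝ} {t : ℝ}
    (hv : ∀ l, DifferentiableWithinAt ℝ (v l) s t) (x : ι → ℝ) :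
    derivWithin (fun y => ∑ l, x l * v l y) s t = ∑ l, x l * derivWithin (v l) s t := by
  rw [derivWithin_fun_sum fun l _ => (hv l).const_mul (x l)]
  exact Finset.sum_congr rfl fun l _ => derivWithin_const_mul _ (hv l)

theorem sum_derivWithin_eq_zero_of_sum_eq_one {v : ι → ℝ → ℝ} {s : Set ℝ} {t : ℝ} (ht : t ∈ s)
    (hv : ∀ l, DifferentiableWithinAt ℝ (v l) s t) (hsum : ∀ y ∈ s, ∑ l, v l y = 1) :
    ∑ l, derivWithin (v l) s t = 0 := by
  rw [← derivWithin_fun_sum fun l _ => hv l, derivWithin_congr hsum (hsum t ht),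
    derivWithin_fun_const, Pi.zero_apply]

theorem sum_mul_eq_of_sum_mul_derivWithin_eq_zero {v : ι → ℝ → ℝ} {a b : ℝ} (hab : a ≤ b)
    (hv : ∀ l, DifferentiableOn ℝ (v l) (Icc a b)) (x : ι → ℝ)
    (h : ∀ t ∈ Icc a b, ∑ l, x l * derivWithin (v l) (Icc a b) t = 0) :
    ∑ l, x l * v l b = ∑ l, x l * v l a :=
  constant_of_derivWithin_zero (fun t ht => DifferentiableWithinAt.fun_sum fun l _ =>
      (hv l t ht).const_mul (x l))
    (fun t ht => by
      rw [derivWithin_sum_mul (fun l => hv l t (Ico_subset_Icc_self ht))]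
      exact h t (Ico_subset_Icc_self ht))
    b ⟨hab, le_rfl⟩

variable {κ : Type*} [Fintype κ] [DecidableEq κ] {ℓ ρ : κ → ℝ} {ψ : κ → κ → ℝ → ℝ}

theorem sum_mul_apply_length (hψ_end : ∀ e e', ψ e e' (ℓ e') = if e' = e then 1 else 0)
    (x : κ → ℝ) (e : κ) : ∑ l, x l * ψ l e (ℓ e) = x e := by
  simp [hψ_end]

theorem eq_zero_of_starEnergy_eq_zero (hℓ : ∀ e, 0 < ℓ e) (hρ : ∀ e, 0 < ρ e)
    (hψ : ∀ l e, ContinuousOn (ψ l e) (Icc 0 (ℓ e)))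
    (hψ_end : ∀ e e', ψ e e' (ℓ e') = if e' = e then 1 else 0) {x : κ → ℝ}
    (h : starEnergy ℓ ρ ψ x = 0) : x = 0 :=
  funext fun e => by
    rw [← sum_mul_apply_length hψ_end x e]
    exact sum_mul_eq_zero_of_starEnergy_eq_zero hℓ hρ hψ h e _ ⟨(hℓ e).le, le_rfl⟩

theorem eq_of_starEnergy_derivWithin_eq_zero (hℓ : ∀ e, 0 < ℓ e) (hρ : ∀ e, 0 < ρ e)
    (hψ : ∀ l e, ContDiffOn ℝ 1 (ψ l e) (Icc 0 (ℓ e)))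
    (hψ_vertex : ∀ e e₁ e₂, ψ e e₁ 0 = ψ e e₂ 0)
    (hψ_end : ∀ e e', ψ e e' (ℓ e') = if e' = e then 1 else 0) {x : κ → ℝ}
    (h : starEnergy ℓ ρ (fun l e => derivWithin (ψ l e) (Icc 0 (ℓ e))) x = 0) (e e' : κ) :
    x e = x e' := by
  have hvertex : ∀ e, x e = ∑ l, x l * ψ l e 0 := fun e => by
    rw [← sum_mul_apply_length hψ_end x e]
    exact sum_mul_eq_of_sum_mul_derivWithin_eq_zero (hℓ e).le
      (fun l => (hψ l e).differentiableOn one_ne_zero) x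
      (sum_mul_eq_zero_of_starEnergy_eq_zero hℓ hρ
        (fun l e => (hψ l e).continuousOn_derivWithin (uniqueDiffOn_Icc (hℓ e)) le_rfl) h e)
  rw [hvertex e, hvertex e']
  simp only [hψ_vertex _ e e']

end PartitionOfUnity

section StarGraph

variable {n : ℕ} {ℓ ρ : Fin n → ℝ} {ψ : Fin n → Fin n → ℝ → ℝ}

theorem exists_quadFormC_starGram_bounds (hℓ : ∀ e, 0 < ℓ e) (hρ : ∀ e, 0 < ρ e)
    (hψ : ∀ l e, ContinuousOn (ψ l e) (Icc 0 (ℓ e)))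
    (hψ_end : ∀ e e', ψ e e' (ℓ e') = if e' = e then 1 else 0) :
    ∃ α : ℝ, 0 < α ∧ ∀ f, 1 / α * ∑ i, ‖f i‖ ^ 2 ≤ quadFormC (starGram ℓ ρ ψ) f ∧
      quadFormC (starGram ℓ ρ ψ) f ≤ α * ∑ i, ‖f i‖ ^ 2 := by
  have hℓ' e := (hℓ e).le
  have hρ' e := (hρ e).le
  refine exists_quadFormC_bounds_of_pos _ fun f hf =>
    (quadFormC_starGram_nonneg hℓ' hρ' hψ f).lt_of_ne fun h => hf (funext fun i => ?_)
  obtain ⟨hre, him⟩ := (quadFormC_starGram_eq_zero_iff hℓ' hρ' hψ f).1 h.symm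
  exact Complex.ext (congrFun (eq_zero_of_starEnergy_eq_zero hℓ hρ hψ hψ_end hre) i)
    (congrFun (eq_zero_of_starEnergy_eq_zero hℓ hρ hψ hψ_end him) i)

theorem exists_quadFormC_starGram_derivWithin_perpOne_bounds (hℓ : ∀ e, 0 < ℓ e)
    (hρ : ∀ e, 0 < ρ e) (hψ : ∀ l e, ContDiffOn ℝ 1 (ψ l e) (Icc 0 (ℓ e)))
    (hψ_vertex : ∀ e e₁ e₂, ψ e e₁ 0 = ψ e e₂ 0)
    (hψ_sum : ∀ e', ∀ t ∈ Icc (0 : ℝ) (ℓ e'), ∑ e, ψ e e' t = 1)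
    (hψ_end : ∀ e e', ψ e e' (ℓ e') = if e' = e then 1 else 0) :
    ∃ α : ℝ, 0 < α ∧ ∀ f, 1 / α * ∑ i, ‖perpOne f i‖ ^ 2 ≤
        quadFormC (starGram ℓ ρ fun l e => derivWithin (ψ l e) (Icc 0 (ℓ e))) f ∧
      quadFormC (starGram ℓ ρ fun l e => derivWithin (ψ l e) (Icc 0 (ℓ e))) f ≤
        α * ∑ i, ‖perpOne f i‖ ^ 2 := by
  have hℓ' e := (hℓ e).le
  have hρ' e := (hρ e).le
  have hD l e : ContinuousOn (derivWithin (ψ l e) (Icc 0 (ℓ e))) (Icc 0 (ℓ e)) :=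
    (hψ l e).continuousOn_derivWithin (uniqueDiffOn_Icc (hℓ e)) le_rfl
  have hD_sum e : ∀ t ∈ Icc 0 (ℓ e), ∑ l, derivWithin (ψ l e) (Icc 0 (ℓ e)) t = 0 :=
    fun t ht => sum_derivWithin_eq_zero_of_sum_eq_one ht
      (fun l => (hψ l e).differentiableOn one_ne_zero t ht) (hψ_sum e)
  refine exists_quadFormC_perpOne_bounds _ (quadFormC_starGram_nonneg hℓ' hρ' hD)
    (fun f c => ?_) fun f h i j => ?_
  · simp only [quadFormC_starGram hℓ' hD, Complex.add_re, Complex.add_im,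
      starEnergy_add_const hℓ' hD_sum]
  · obtain ⟨hre, him⟩ := (quadFormC_starGram_eq_zero_iff hℓ' hρ' hD f).1 h
    exact Complex.ext (eq_of_starEnergy_derivWithin_eq_zero hℓ hρ hψ hψ_vertex hψ_end hre i j)
      (eq_of_starEnergy_derivWithin_eq_zero hℓ hρ hψ hψ_vertex hψ_end him i j)

end StarGraph

theorem stmt9_general (k : ℕ)
    (ℓ ρ : Fin (k + 1) → ℝ) (hℓ : ∀ e, 0 < ℓ e) (hρ : ∀ e, 0 < ρ e)
    (ψ : Fin (k + 1) → Fin (k + 1) → ℝ → ℝ)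
    (hψ_C1 : ∀ e e', ContDiffOn ℝ 1 (ψ e e') (Icc 0 (ℓ e')))
    (hψ_vertex : ∀ e e₁ e₂, ψ e e₁ 0 = ψ e e₂ 0)
    (hψ_sum : ∀ e', ∀ t ∈ Icc (0 : ℝ) (ℓ e'), ∑ e, ψ e e' t = 1)
    (hψ_end : ∀ e e', ψ e e' (ℓ e') = if e' = e then 1 else 0) :
    (Matrix.PosSemidef (Matrix.of fun l m : Fin (k + 1) =>
        ∑ e', ρ e' * ∫ t in (0 : ℝ)..(ℓ e'), deriv (ψ l e') t * deriv (ψ m e') t)) ∧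
    (Matrix.PosDef (Matrix.of fun l m : Fin (k + 1) =>
        ∑ e', ρ e' * ∫ t in (0 : ℝ)..(ℓ e'), ψ l e' t * ψ m e' t)) ∧
    (∃ αA : ℝ, 0 < αA ∧ ∀ f : Fin (k + 1) → ℂ,
      (1 / αA) * (∑ i, ‖perpOne f i‖ ^ 2) ≤
          quadFormC (fun l m =>
            ∑ e', ρ e' * ∫ t in (0 : ℝ)..(ℓ e'), deriv (ψ l e') t * deriv (ψ m e') t) f ∧
        quadFormC (fun l m =>
            ∑ e', ρ e' * ∫ t in (0 : ℝ)..(ℓ e'), deriv (ψ l e') t * deriv (ψ m e') t) f ≤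
          αA * (∑ i, ‖perpOne f i‖ ^ 2)) ∧
    (∃ αB : ℝ, 0 < αB ∧ ∀ f : Fin (k + 1) → ℂ,
      (1 / αB) * (∑ i, ‖f i‖ ^ 2) ≤
          quadFormC (fun l m =>
            ∑ e', ρ e' * ∫ t in (0 : ℝ)..(ℓ e'), ψ l e' t * ψ m e' t) f ∧
        quadFormC (fun l m =>
            ∑ e', ρ e' * ∫ t in (0 : ℝ)..(ℓ e'), ψ l e' t * ψ m e' t) f ≤
          αB * (∑ i, ‖f i‖ ^ 2)) := by
  have hℓ' e := (hℓ e).le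
  have hρ' e := (hρ e).le
  have hψ l e : ContinuousOn (ψ l e) (Icc 0 (ℓ e)) := (hψ_C1 l e).continuousOn
  have hD l e : ContinuousOn (derivWithin (ψ l e) (Icc 0 (ℓ e))) (Icc 0 (ℓ e)) :=
    (hψ_C1 l e).continuousOn_derivWithin (uniqueDiffOn_Icc (hℓ e)) le_rfl
  have hderiv : starGram ℓ ρ (fun l e => deriv (ψ l e))
      = starGram ℓ ρ fun l e => derivWithin (ψ l e) (Icc 0 (ℓ e)) :=
    starGram_congr_Ioo hℓ' fun l e t ht => (derivWithin_of_mem_nhds (Icc_mem_nhds ht.1 ht.2)).symm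
  refine ⟨?_, posDef_starGram hℓ' hρ' hψ fun x => eq_zero_of_starEnergy_eq_zero hℓ hρ hψ hψ_end,
    ?_, exists_quadFormC_starGram_bounds hℓ hρ hψ hψ_end⟩
  · have h := posSemidef_starGram hℓ' hρ' hD
    rwa [← hderiv] at h
  · have h := exists_quadFormC_starGram_derivWithin_perpOne_bounds hℓ hρ hψ_C1 hψ_vertex hψ_sum
      hψ_end
    rwa [← hderiv] at h

/-- (Lemma 3.1, one-dimensional part.) For a partition of unity `(ψ_e)` on a
weighted star graph adapted to the edge endpoints, the stiffness matrix
`Ā_{l,m} = ∑_{e'} ρ_{e'} ∫ ψ_{l,e'}'·ψ_{m,e'}'` is positive semidefinite with quadratic form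
equivalent to `|f⌞1⃗|²`, and the mass matrix `B̄_{l,m} = ∑_{e'} ρ_{e'} ∫ ψ_{l,e'}·ψ_{m,e'}`
is positive definite with quadratic form equivalent to `|f|²`. -/
theorem stmt9 (k : ℕ) (hk : 1 ≤ k)
    (ℓ ρ : Fin (k + 1) → ℝ) (hℓ : ∀ e, 0 < ℓ e) (hρ : ∀ e, 0 < ρ e)
    (ψ : Fin (k + 1) → Fin (k + 1) → ℝ → ℝ)
    (hψ_C1 : ∀ e e', ContDiffOn ℝ 1 (ψ e e') (Icc 0 (ℓ e')))
    (hψ_vertex : ∀ e e₁ e₂, ψ e e₁ 0 = ψ e e₂ 0)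
    (hψ_nonneg : ∀ e e', ∀ t ∈ Icc (0 : ℝ) (ℓ e'), 0 ≤ ψ e e' t)
    (hψ_sum : ∀ e', ∀ t ∈ Icc (0 : ℝ) (ℓ e'), ∑ e, ψ e e' t = 1)
    (hψ_end : ∀ e e', ψ e e' (ℓ e') = if e' = e then 1 else 0) :
    (Matrix.PosSemidef (Matrix.of fun l m : Fin (k + 1) =>
        ∑ e', ρ e' * ∫ t in (0 : ℝ)..(ℓ e'), deriv (ψ l e') t * deriv (ψ m e') t)) ∧
    (Matrix.PosDef (Matrix.of fun l m : Fin (k + 1) =>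
        ∑ e', ρ e' * ∫ t in (0 : ℝ)..(ℓ e'), ψ l e' t * ψ m e' t)) ∧
    (∃ αA : ℝ, 0 < αA ∧ ∀ f : Fin (k + 1) → ℂ,
      (1 / αA) * (∑ i, ‖perpOne f i‖ ^ 2) ≤
          quadFormC (fun l m =>
            ∑ e', ρ e' * ∫ t in (0 : ℝ)..(ℓ e'), deriv (ψ l e') t * deriv (ψ m e') t) f ∧
        quadFormC (fun l m =>
            ∑ e', ρ e' * ∫ t in (0 : ℝ)..(ℓ e'), deriv (ψ l e') t * deriv (ψ m e') t) f ≤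
          αA * (∑ i, ‖perpOne f i‖ ^ 2)) ∧
    (∃ αB : ℝ, 0 < αB ∧ ∀ f : Fin (k + 1) → ℂ,
      (1 / αB) * (∑ i, ‖f i‖ ^ 2) ≤
          quadFormC (fun l m =>
            ∑ e', ρ e' * ∫ t in (0 : ℝ)..(ℓ e'), ψ l e' t * ψ m e' t) f ∧
        quadFormC (fun l m =>
            ∑ e', ρ e' * ∫ t in (0 : ℝ)..(ℓ e'), ψ l e' t * ψ m e' t) f ≤
          αB * (∑ i, ‖f i‖ ^ 2)) :=
  stmt9_general k ℓ ρ hℓ hρ ψ hψ_C1 hψ_vertex hψ_sum hψ_end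
end
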